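/- Let $X \in \mathbb{R}^{n \times N}$, and suppose $W_1 \in \mathbb{R}^{m \times n}$, $W_2 \in \mathbb{R}^{n \times m}$ jointly minimize $\|X - W_2 W_1 X\|_F^2$, where $X X^T$ is positive definite and $W_2$ has full column rank. Then the product $P = W_2 W_1$ satisfies $P (X X^T) = (P (X X^T))^T$ and $P^2 = P$, i.e., $P$ is a projection that is self-adjoint with respect to the inner product induced by $X X^T$. -/
import Mathlib

open Matrix

/-- Squared Frobenius norm of a real matrix. -/
def frobSq {a b : ℕ} (M : Matrix (Fin a) (Fin b) ℝ) : ℝ := ∑ i, ∑ j, (M i j) ^ 2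

/-- Frobenius inner product via trace. -/
def ipF {a b : ℕ} (M N : Matrix (Fin a) (Fin b) ℝ) : ℝ := trace (Mᵀ * N)

lemma ipF_eq_sum {a b : ℕ} (M N : Matrix (Fin a) (Fin b) ℝ) :
    ipF M N = ∑ i, ∑ j, M i j * N i j := by
  simp only [ipF, trace, Matrix.mul_apply, diag, transpose_apply]
  rw [Finset.sum_comm]

lemma frobSq_eq_ipF {a b : ℕ} (M : Matrix (Fin a) (Fin b) ℝ) : frobSq M = ipF M M := by
  simp [frobSq, ipF_eq_sum, sq]

lemma ipF_self_nonneg {a b : ℕ} (M : Matrix (Fin a) (Fin b) ℝ) : 0 ≤ ipF M M := by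
  rw [← frobSq_eq_ipF]
  exact Finset.sum_nonneg fun i _ => Finset.sum_nonneg fun j _ => sq_nonneg _

lemma ipF_self_eq_zero {a b : ℕ} (M : Matrix (Fin a) (Fin b) ℝ) (h : ipF M M = 0) : M = 0 := by
  rw [← frobSq_eq_ipF, frobSq] at h
  ext i j
  have h1 : ∀ i ∈ Finset.univ, (0:ℝ) ≤ ∑ j, (M i j)^2 :=
    fun i _ => Finset.sum_nonneg fun j _ => sq_nonneg _
  have h2 := (Finset.sum_eq_zero_iff_of_nonneg h1).mp h i (Finset.mem_univ i)
  have h3 := (Finset.sum_eq_zero_iff_of_nonneg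
    (fun j _ => sq_nonneg (M i j))).mp h2 j (Finset.mem_univ j)
  simpa using pow_eq_zero_iff (n := 2) (by norm_num) |>.mp h3

lemma ipF_mul_left {a b c : ℕ} (M : Matrix (Fin a) (Fin b) ℝ)
    (K : Matrix (Fin a) (Fin c) ℝ) (V : Matrix (Fin c) (Fin b) ℝ) :
    ipF M (K * V) = ipF (Kᵀ * M) V := by
  simp only [ipF, transpose_mul, transpose_transpose, Matrix.mul_assoc]

lemma ipF_mul_right {a b c : ℕ} (M : Matrix (Fin a) (Fin b) ℝ)
    (V : Matrix (Fin a) (Fin c) ℝ) (K : Matrix (Fin c) (Fin b) ℝ) :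
    ipF M (V * K) = ipF (M * Kᵀ) V := by
  have h : (M * Kᵀ)ᵀ * V = K * (Mᵀ * V) := by
    simp only [transpose_mul, transpose_transpose, Matrix.mul_assoc]
  rw [ipF, ipF, h, trace_mul_comm, ← Matrix.mul_assoc, Matrix.mul_assoc V K,
    trace_mul_comm, Matrix.mul_assoc]

lemma frob_expand {a b : ℕ} (A B : Matrix (Fin a) (Fin b) ℝ) (t : ℝ) :
    frobSq (A - t • B) = frobSq A - 2*t*(ipF A B) + t^2 * frobSq B := by
  simp only [frobSq_eq_ipF, ipF, transpose_sub, transpose_smul, Matrix.sub_mul,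
    Matrix.mul_sub, Matrix.smul_mul, Matrix.mul_smul, trace_sub, trace_smul,
    smul_eq_mul, smul_smul]
  have h : trace (Bᵀ * A) = trace (Aᵀ * B) := by
    rw [← trace_transpose (Aᵀ * B), transpose_mul, transpose_transpose]
  rw [h]; ring

lemma quad_coeff_zero (c d : ℝ) (hd : 0 ≤ d) (h : ∀ t : ℝ, 0 ≤ t^2*d - 2*t*c) : c = 0 := by
  by_contra hc
  have hc' : c ≠ 0 := hc
  have h0 := h (c/(d+1))
  have hd1 : (0:ℝ) < d + 1 := by linarith
  have hc2 : 0 < c^2 := by positivity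
  have key : (c/(d+1))^2*d - 2*(c/(d+1))*c = (c^2*d - 2*c^2*(d+1))/(d+1)^2 := by
    field_simp
  rw [key] at h0
  have hneg : c^2*d - 2*c^2*(d+1) < 0 := by nlinarith
  have h5 : (c^2*d - 2*c^2*(d+1))/(d+1)^2 < 0 := div_neg_of_neg_of_pos hneg (by positivity)
  linarith

/-- At a joint minimizer of the linear autoencoder objective (with `X Xᵀ` positive
definite and `W₂` of full column rank), the product `P = W₂ W₁` is idempotent and
self-adjoint with respect to the inner product induced by `X Xᵀ`. -/
theorem stmt17 {n m N : ℕ} (X : Matrix (Fin n) (Fin N) ℝ)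
    (hX : (X * Xᵀ).PosDef)
    (W₁ : Matrix (Fin m) (Fin n) ℝ) (W₂ : Matrix (Fin n) (Fin m) ℝ)
    (hrank : IsUnit (W₂ᵀ * W₂).det)
    (hmin : ∀ (W₁' : Matrix (Fin m) (Fin n) ℝ) (W₂' : Matrix (Fin n) (Fin m) ℝ),
      frobSq (X - W₂ * W₁ * X) ≤ frobSq (X - W₂' * W₁' * X)) :
    let P := W₂ * W₁
    (P * (X * Xᵀ))ᵀ = P * (X * Xᵀ) ∧ P * P = P := by
  intro P
  have hPdef : P = W₂ * W₁ := rfl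
  set A := X - W₂ * W₁ * X with hA
  -- directional derivatives vanish
  have key1 : ∀ V : Matrix (Fin m) (Fin n) ℝ, ipF A (W₂ * V * X) = 0 := by
    intro V
    apply quad_coeff_zero _ (frobSq (W₂ * V * X)) (by rw [frobSq_eq_ipF]; exact ipF_self_nonneg _)
    intro t
    have h := hmin (W₁ + t • V) W₂
    have hre : X - W₂ * (W₁ + t • V) * X = A - t • (W₂ * V * X) := by
      rw [hA]
      simp only [Matrix.mul_add, Matrix.add_mul, Matrix.mul_smul, Matrix.smul_mul]
      abel
    rw [hre, frob_expand] at h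
    linarith
  have key2 : ∀ U : Matrix (Fin n) (Fin m) ℝ, ipF A (U * (W₁ * X)) = 0 := by
    intro U
    rw [← Matrix.mul_assoc]
    apply quad_coeff_zero _ (frobSq (U * W₁ * X)) (by rw [frobSq_eq_ipF]; exact ipF_self_nonneg _)
    intro t
    have h := hmin W₁ (W₂ + t • U)
    have hre : X - (W₂ + t • U) * W₁ * X = A - t • (U * W₁ * X) := by
      rw [hA]
      simp only [Matrix.mul_add, Matrix.add_mul, Matrix.mul_smul, Matrix.smul_mul]
      abel
    rw [hre, frob_expand] at h
    linarith
  -- first-order conditions as matrix equations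
  have e1 : W₂ᵀ * (A * Xᵀ) = 0 := by
    apply ipF_self_eq_zero
    rw [← ipF_mul_left, ← ipF_mul_right]
    exact key1 _
  have e2 : A * (Xᵀ * W₁ᵀ) = 0 := by
    apply ipF_self_eq_zero
    rw [show Xᵀ * W₁ᵀ = (W₁ * X)ᵀ from (transpose_mul _ _).symm, ← ipF_mul_right]
    exact key2 _
  -- abstract S and G
  obtain ⟨S, hS⟩ : ∃ S', S' = X * Xᵀ := ⟨_, rfl⟩
  obtain ⟨G, hG⟩ : ∃ G', G' = W₂ᵀ * W₂ := ⟨_, rfl⟩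
  rw [← hS]
  have hSunit : IsUnit S.det := by
    rw [hS]; exact isUnit_iff_ne_zero.mpr (ne_of_gt hX.det_pos)
  have hGdet : IsUnit G.det := by rw [hG]; exact hrank
  have hSsymm : Sᵀ = S := by rw [hS, transpose_mul, transpose_transpose]
  have hGsymm : Gᵀ = G := by rw [hG, transpose_mul, transpose_transpose]
  have hGinv : G * G⁻¹ = 1 := mul_nonsing_inv G hGdet
  have hGinv' : G⁻¹ * G = 1 := nonsing_inv_mul G hGdet
  have hSinv : S * S⁻¹ = 1 := mul_nonsing_inv S hSunit
  have hGinvsymm : (G⁻¹)ᵀ = G⁻¹ := by rw [transpose_nonsing_inv, hGsymm]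
  -- e1 ⟹ W₂ᵀ = G W₁
  have e1' : W₂ᵀ * S = G * (W₁ * S) := by
    have h : W₂ᵀ * (A * Xᵀ) = W₂ᵀ * S - G * (W₁ * S) := by
      rw [hA, hS, hG]
      simp only [Matrix.sub_mul, Matrix.mul_sub, Matrix.mul_assoc]
    rw [h, sub_eq_zero] at e1
    exact e1
  have hSi : ∀ (M : Matrix (Fin m) (Fin n) ℝ), M * S * S⁻¹ = M := fun M => by
    rw [Matrix.mul_assoc, hSinv, Matrix.mul_one]
  have hW2T : W₂ᵀ = G * W₁ := by
    calc W₂ᵀ = W₂ᵀ * S * S⁻¹ := (hSi _).symm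
    _ = G * (W₁ * S) * S⁻¹ := by rw [e1']
    _ = G * W₁ * S * S⁻¹ := by simp only [Matrix.mul_assoc]
    _ = G * W₁ := hSi _
  have hW1 : W₁ = G⁻¹ * W₂ᵀ := by
    rw [hW2T, ← Matrix.mul_assoc, hGinv', Matrix.one_mul]
  have hW1T : W₁ᵀ = W₂ * G⁻¹ := by
    rw [hW1, transpose_mul, hGinvsymm, transpose_transpose]
  have hP : P = W₂ * (G⁻¹ * W₂ᵀ) := by rw [hPdef, hW1]
  have hPsymm : Pᵀ = P := by
    rw [hP]
    simp only [transpose_mul, transpose_transpose, hGinvsymm, Matrix.mul_assoc]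
  have hPP : P * P = P := by
    rw [hP]
    calc W₂ * (G⁻¹ * W₂ᵀ) * (W₂ * (G⁻¹ * W₂ᵀ)) = W₂ * (G⁻¹ * (G * (G⁻¹ * W₂ᵀ))) := by
          rw [hG]; simp only [Matrix.mul_assoc]
    _ = W₂ * (G⁻¹ * W₂ᵀ) := by rw [← Matrix.mul_assoc G⁻¹ G, hGinv', Matrix.one_mul]
  -- e2 ⟹ S W₂ = P S W₂
  have e2'' : S * (W₂ * G⁻¹) = P * (S * (W₂ * G⁻¹)) := by
    have h : A * (Xᵀ * W₁ᵀ) = S * (W₂ * G⁻¹) - P * (S * (W₂ * G⁻¹)) := by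
      rw [hA, hW1T, hS, hPdef]
      simp only [Matrix.sub_mul, Matrix.mul_sub, Matrix.mul_assoc]
    rw [h, sub_eq_zero] at e2
    exact e2
  have e2' : S * W₂ = P * (S * W₂) := by
    calc S * W₂ = S * (W₂ * G⁻¹) * G := by
          simp only [Matrix.mul_assoc]; rw [hGinv', Matrix.mul_one]
    _ = P * (S * (W₂ * G⁻¹)) * G := by conv_lhs => rw [e2'']
    _ = P * (S * W₂) := by simp only [Matrix.mul_assoc]; rw [hGinv', Matrix.mul_one]
  have h1 : (P * S)ᵀ = P * (S * P) := by
    rw [transpose_mul, hSsymm, hPsymm]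
    calc S * P = S * (W₂ * (G⁻¹ * W₂ᵀ)) := by rw [hP]
    _ = (S * W₂) * (G⁻¹ * W₂ᵀ) := by simp only [Matrix.mul_assoc]
    _ = (P * (S * W₂)) * (G⁻¹ * W₂ᵀ) := by rw [← e2']
    _ = P * (S * (W₂ * (G⁻¹ * W₂ᵀ))) := by simp only [Matrix.mul_assoc]
    _ = P * (S * P) := by rw [← hP]
  have h2 : P * S = P * S * P := by
    calc P * S = ((P * S)ᵀ)ᵀ := (transpose_transpose _).symm
    _ = (P * (S * P))ᵀ := by rw [h1]
    _ = (S * P)ᵀ * Pᵀ := transpose_mul _ _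
    _ = P * S * P := by rw [transpose_mul, hSsymm, hPsymm]
  constructor
  · rw [h1, ← Matrix.mul_assoc, ← h2]
  · exact hPP
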